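/- For every q ∈ [α−β₁, α), the (nonnegative) integral C(α,q,B) = ∫_{ℝ^{d−1}} ∫_0^1 (s^q − 1)(1 − s^{α−q−1}) (1−s)^{−1−α} B(((1−s)ũ, 1), (0̃, s)) (|ũ|² + 1)^{−(d+α)/2} ds dũ diverges, i.e. C(α,q,B) = +∞; moreover C(α,q,B) → +∞ as q increases to α−β₁. -/

import Mathlib

open MeasureTheory Filter

/-- The Euclidean norm on `ℝ^{m} × ℝ`, viewed as `ℝ^{m+1}`. -/
noncomputable def nrm {m : ℕ} (x : EuclideanSpace ℝ (Fin m) × ℝ) : ℝ :=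
  Real.sqrt (‖x.1‖ ^ 2 + x.2 ^ 2)

/-- The integrand of the constant `C(α,q,B)` in dimension `d = n + 2`, as a function of
`p = (ũ, s) ∈ ℝ^{d-1} × ℝ`. -/
noncomputable def CconstIntegrand (n : ℕ) (α q : ℝ)
    (B : (EuclideanSpace ℝ (Fin (n + 1)) × ℝ) → (EuclideanSpace ℝ (Fin (n + 1)) × ℝ) → ℝ)
    (p : EuclideanSpace ℝ (Fin (n + 1)) × ℝ) : ℝ :=
  (p.2 ^ q - 1) * (1 - p.2 ^ (α - q - 1)) / (1 - p.2) ^ (1 + α) *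
    B ((1 - p.2) • p.1, 1) (0, p.2) / (‖p.1‖ ^ 2 + 1) ^ (((n : ℝ) + 2 + α) / 2)

/-- `C(α,q,B)` as an extended-real (nonnegative-part) integral, in dimension `d = n + 2`. -/
noncomputable def CconstE (n : ℕ) (α q : ℝ)
    (B : (EuclideanSpace ℝ (Fin (n + 1)) × ℝ) → (EuclideanSpace ℝ (Fin (n + 1)) × ℝ) → ℝ) :
    ENNReal :=
  ∫⁻ p in (Set.univ ×ˢ Set.Ioo (0 : ℝ) 1 :
      Set (EuclideanSpace ℝ (Fin (n + 1)) × ℝ)), ENNReal.ofReal (CconstIntegrand n α q B p)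

namespace CconstAux
open Set

lemma g_meas (c : ℝ) : Measurable fun s : ℝ => ENNReal.ofReal (Real.exp (Real.log s * c)) :=
  ((Real.measurable_log.mul_const c).exp).ennreal_ofReal

lemma g_eq {c s : ℝ} (hs : 0 < s) : Real.exp (Real.log s * c) = s ^ c :=
  (Real.rpow_def_of_pos hs c).symm

lemma lint_congr (c s₀ : ℝ) :
    (∫⁻ s in Ioo (0:ℝ) s₀, ENNReal.ofReal (Real.exp (Real.log s * c)))
      = ∫⁻ s in Ioo (0:ℝ) s₀, ENNReal.ofReal (s ^ c) :=
  setLIntegral_congr_fun measurableSet_Ioo (fun s hs => by simp only [g_eq hs.1])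

lemma nonneg_ae (c s₀ : ℝ) :
    0 ≤ᵐ[volume.restrict (Ioo (0:ℝ) s₀)] fun s : ℝ => s ^ c :=
  (ae_restrict_iff' measurableSet_Ioo).2
    (ae_of_all _ fun s hs => Real.rpow_nonneg hs.1.le _)

lemma asm (c s₀ : ℝ) :
    AEStronglyMeasurable (fun s : ℝ => s ^ c) (volume.restrict (Ioo (0:ℝ) s₀)) :=
  (((Real.measurable_log.mul_const c).exp).aestronglyMeasurable).congr <|
    (ae_restrict_iff' measurableSet_Ioo).2 (ae_of_all _ fun s hs => g_eq hs.1)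

lemma lint_exp_eq_top {s₀ c : ℝ} (h0 : 0 < s₀) (hc : c ≤ -1) :
    (∫⁻ s in Ioo (0:ℝ) s₀, ENNReal.ofReal (Real.exp (Real.log s * c))) = ⊤ := by
  rw [lint_congr]
  by_contra h
  have hInt : IntegrableOn (fun s : ℝ => s ^ c) (Ioo (0:ℝ) s₀) := by
    refine ⟨asm c s₀, ?_⟩
    rw [hasFiniteIntegral_iff_ofReal (nonneg_ae c s₀)]
    exact lt_top_iff_ne_top.2 h
  rw [intervalIntegral.integrableOn_Ioo_rpow_iff h0] at hInt
  linarith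

lemma lint_exp_ge {s₀ c : ℝ} (h0 : 0 < s₀) (hc : -1 < c) :
    ENNReal.ofReal (s₀ ^ (c + 1) / (c + 1))
      ≤ ∫⁻ s in Ioo (0:ℝ) s₀, ENNReal.ofReal (Real.exp (Real.log s * c)) := by
  rw [lint_congr]
  have hInt : IntegrableOn (fun s : ℝ => s ^ c) (Ioo (0:ℝ) s₀) :=
    (intervalIntegral.integrableOn_Ioo_rpow_iff h0).2 hc
  rw [← ofReal_integral_eq_lintegral_ofReal hInt (nonneg_ae c s₀)]
  apply ENNReal.ofReal_le_ofReal
  have hval : (∫ s in Ioo (0:ℝ) s₀, s ^ c) = s₀ ^ (c + 1) / (c + 1) := by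
    rw [← integral_Ioc_eq_integral_Ioo, ← intervalIntegral.integral_of_le h0.le,
      integral_rpow (Or.inl hc), Real.zero_rpow (by linarith : c + 1 ≠ 0), sub_zero]
  rw [hval]

lemma lint_prod_snd {n : ℕ} (A : Set (EuclideanSpace ℝ (Fin (n+1)))) (hA : MeasurableSet A)
    (T : Set ℝ) (hT : MeasurableSet T) (f : ℝ → ENNReal) (hf : Measurable f) :
    (∫⁻ p in A ×ˢ T, f p.2 ∂(volume : Measure (EuclideanSpace ℝ (Fin (n+1)) × ℝ)))
      = volume A * ∫⁻ s in T, f s := by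
  rw [Measure.volume_eq_prod, ← Measure.prod_restrict,
    lintegral_prod (fun p => f p.2) ((hf.comp measurable_snd).aemeasurable)]
  simp only [lintegral_const, Measure.restrict_apply MeasurableSet.univ, Set.univ_inter]
  rw [mul_comm]

set_option maxHeartbeats 1000000 in
lemma pointwise_bound (n : ℕ) (α β₁ C₁ C₃ : ℝ) (Φ : ℝ → ℝ)
    (B : (EuclideanSpace ℝ (Fin (n + 1)) × ℝ) → (EuclideanSpace ℝ (Fin (n + 1)) × ℝ) → ℝ)
    (hα : 0 < α) (hβ0 : 0 ≤ β₁) (hβ₁1 : β₁ < 1) (hβ₁α : β₁ < α)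
    (hC₁ : 0 < C₁) (hC₃ : 1 ≤ C₃) (hΦ2 : 0 < Φ 2)
    (hΦlow : ∀ R : ℝ, 2 < R → C₁ * (R / 2) ^ β₁ ≤ Φ R / Φ 2)
    (hA3low : ∀ x y : EuclideanSpace ℝ (Fin (n + 1)) × ℝ, 0 < x.2 → 0 < y.2 →
      C₃⁻¹ * Φ (nrm (x - y) ^ 2 / (x.2 * y.2)) ≤ B x y)
    (s₀ : ℝ) (hs₀pos : 0 < s₀) (hs₀32 : s₀ ≤ 1/32)
    (hs₀exp : s₀ ≤ (2:ℝ) ^ (-(2/(1-β₁))))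
    (q : ℝ) (hq1 : (α - β₁)/2 ≤ q) (hq2 : α - β₁ - (1-β₁)/2 ≤ q)
    (u : EuclideanSpace ℝ (Fin (n + 1))) (hu : ‖u‖ < 1)
    (s : ℝ) (hs : 0 < s) (hss : s < s₀) :
    (1 - s₀ ^ ((α-β₁)/2)) * (1/2) * (C₃⁻¹ * (C₁ * Φ 2 * 8⁻¹)) *
        ((2:ℝ) ^ (((n:ℝ)+2+α)/2))⁻¹ * s ^ (α - q - 1 - β₁)
      ≤ CconstIntegrand n α q B (u, s) := by
  have hs32 : s < 1/32 := hss.trans_le hs₀32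
  have hs1 : s < 1 := by linarith
  have hC₃pos : 0 < C₃⁻¹ := by positivity
  have hγ₀pos : 0 < (1-β₁)/2 := by linarith
  -- Step 1 : 2 ≤ s ^ (α - q - 1)
  have e1 : s ^ (-((1-β₁)/2)) ≤ s ^ (α - q - 1) :=
    Real.rpow_le_rpow_of_exponent_ge hs hs1.le (by linarith)
  have e2 : s₀ ^ (-((1-β₁)/2)) ≤ s ^ (-((1-β₁)/2)) :=
    Real.rpow_le_rpow_of_nonpos hs hss.le (by linarith)
  have e3 : (2:ℝ) ≤ s₀ ^ (-((1-β₁)/2)) := by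
    have h2 := Real.rpow_le_rpow_of_nonpos hs₀pos hs₀exp (by linarith : -((1-β₁)/2) ≤ 0)
    rw [← Real.rpow_mul (by norm_num : (0:ℝ) ≤ 2)] at h2
    have hne : (1-β₁) ≠ 0 := by linarith
    have hab : -(2/(1-β₁)) * -((1-β₁)/2) = 1 := by
      field_simp
    rw [hab, Real.rpow_one] at h2
    exact h2
  have h1 : (2:ℝ) ≤ s ^ (α - q - 1) := le_trans (le_trans e3 e2) e1
  have hsa_pos : 0 < s ^ (α - q - 1) := Real.rpow_pos_of_pos hs _
  -- Step 2 : c₁ bound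
  have hqm : 0 < (α - β₁)/2 := by linarith
  have hc₁pos : 0 < 1 - s₀ ^ ((α-β₁)/2) := by
    have := Real.rpow_lt_one hs₀pos.le (by linarith : s₀ < 1) hqm
    linarith
  have h2 : 1 - s₀ ^ ((α-β₁)/2) ≤ 1 - s ^ q := by
    have a1 : s ^ q ≤ s ^ ((α-β₁)/2) :=
      Real.rpow_le_rpow_of_exponent_ge hs hs1.le hq1
    have a2 : s ^ ((α-β₁)/2) ≤ s₀ ^ ((α-β₁)/2) :=
      Real.rpow_le_rpow hs.le hss.le hqm.le
    linarith
  -- numerator bound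
  have hnum : (1 - s₀ ^ ((α-β₁)/2)) * (s ^ (α - q - 1) / 2)
      ≤ (s ^ q - 1) * (1 - s ^ (α - q - 1)) := by
    have hx : s ^ (α - q - 1) / 2 ≤ s ^ (α - q - 1) - 1 := by linarith
    have hmul := mul_le_mul h2 hx (by positivity) (by linarith)
    rw [show (s ^ q - 1) * (1 - s ^ (α - q - 1))
        = (1 - s ^ q) * (s ^ (α - q - 1) - 1) by ring]
    exact hmul
  have hNnn : 0 ≤ (s ^ q - 1) * (1 - s ^ (α - q - 1)) :=
    le_trans (by positivity) hnum
  have hD1 : (1 - s) ^ (1 + α) ≤ 1 :=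
    Real.rpow_le_one (by linarith) (by linarith) (by linarith)
  have hDpos : 0 < (1 - s) ^ (1 + α) := Real.rpow_pos_of_pos (by linarith) _
  have hdiv : (s ^ q - 1) * (1 - s ^ (α - q - 1))
      ≤ (s ^ q - 1) * (1 - s ^ (α - q - 1)) / (1 - s) ^ (1 + α) := by
    rw [le_div_iff₀ hDpos]
    exact mul_le_of_le_one_right hNnn hD1
  -- B lower bound
  have hBlow := hA3low ((1 - s) • u, (1:ℝ)) ((0 : EuclideanSpace ℝ (Fin (n+1))), s)
    (by norm_num) hs
  have hsub : (((1 - s) • u, (1:ℝ)) - ((0 : EuclideanSpace ℝ (Fin (n+1))), s))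
      = ((1 - s) • u, 1 - s) := by
    rw [Prod.mk_sub_mk, sub_zero]
  have hnrm : nrm (((1 - s) • u, (1:ℝ)) - ((0 : EuclideanSpace ℝ (Fin (n+1))), s)) ^ 2
      = (1-s)^2 * ‖u‖^2 + (1-s)^2 := by
    rw [hsub]
    unfold nrm
    rw [Real.sq_sqrt (by positivity)]
    rw [norm_smul, Real.norm_eq_abs, abs_of_pos (by linarith : (0:ℝ) < 1 - s)]
    ring
  rw [hnrm] at hBlow
  simp only [one_mul] at hBlow
  -- hBlow : C₃⁻¹ * Φ (((1-s)^2 * ‖u‖^2 + (1-s)^2) / s) ≤ B ((1-s) • u, 1) (0, s)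
  set T : ℝ := ((1-s)^2 * ‖u‖^2 + (1-s)^2) / s with hTdef
  have h12 : (1:ℝ)/2 < 1 - s := by linarith
  have hTge : (1/4) / s ≤ T := by
    have hq14 : (1/4:ℝ) ≤ (1-s)^2 := by nlinarith [h12]
    rw [div_le_div_iff₀ hs hs]
    nlinarith [hq14, hs.le, mul_nonneg (mul_nonneg (sq_nonneg (1-s)) (sq_nonneg ‖u‖)) hs.le]
  have hT2 : 2 < T := by
    have h24 : (2:ℝ) < (1/4)/s := by rw [lt_div_iff₀ hs]; linarith
    linarith
  have hΦT := hΦlow T hT2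
  have hΦTlow : C₁ * Φ 2 * (T/2) ^ β₁ ≤ Φ T := by
    have h := (le_div_iff₀ hΦ2).mp hΦT
    calc C₁ * Φ 2 * (T/2) ^ β₁ = C₁ * (T/2) ^ β₁ * Φ 2 := by ring
      _ ≤ Φ T := h
  have hT8 : 1/(8*s) ≤ T/2 := by
    have heq : (1/4)/s/2 = 1/(8*s) := by field_simp; ring
    have h' : (1/4)/s/2 ≤ T/2 := by linarith
    rw [heq] at h'
    exact h'
  have hrp : (1/(8*s)) ^ β₁ ≤ (T/2) ^ β₁ := Real.rpow_le_rpow (by positivity) hT8 hβ0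
  have hval : (1/(8*s) : ℝ) ^ β₁ = ((8:ℝ) ^ β₁)⁻¹ * (s ^ β₁)⁻¹ := by
    rw [one_div, Real.inv_rpow (by positivity), Real.mul_rpow (by norm_num) hs.le, mul_inv]
  have h8 : (8:ℝ)⁻¹ * s ^ (-β₁) ≤ (1/(8*s)) ^ β₁ := by
    rw [hval, Real.rpow_neg hs.le]
    have h88 : (8:ℝ) ^ β₁ ≤ 8 := by
      calc (8:ℝ) ^ β₁ ≤ (8:ℝ) ^ (1:ℝ) :=
            Real.rpow_le_rpow_of_exponent_le (by norm_num) (by linarith)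
        _ = 8 := Real.rpow_one 8
    apply mul_le_mul_of_nonneg_right ?_ (by positivity)
    exact inv_anti₀ (by positivity) h88
  have hBfinal : C₃⁻¹ * (C₁ * Φ 2 * (8⁻¹ * s ^ (-β₁))) ≤ B ((1 - s) • u, 1) (0, s) := by
    refine le_trans ?_ hBlow
    apply mul_le_mul_of_nonneg_left ?_ hC₃pos.le
    calc C₁ * Φ 2 * (8⁻¹ * s ^ (-β₁)) = C₁ * Φ 2 * ((8:ℝ)⁻¹ * s ^ (-β₁)) := rfl
      _ ≤ C₁ * Φ 2 * (1/(8*s)) ^ β₁ := by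
          apply mul_le_mul_of_nonneg_left h8 (by positivity)
      _ ≤ C₁ * Φ 2 * (T/2) ^ β₁ := by
          apply mul_le_mul_of_nonneg_left hrp (by positivity)
      _ ≤ Φ T := hΦTlow
  have hBpos' : (0:ℝ) ≤ B ((1 - s) • u, 1) (0, s) :=
    le_trans (by positivity) hBfinal
  have hdenle : (‖u‖^2 + 1 : ℝ) ^ (((n:ℝ)+2+α)/2) ≤ (2:ℝ) ^ (((n:ℝ)+2+α)/2) :=
    Real.rpow_le_rpow (by positivity) (by nlinarith [norm_nonneg u]) (by positivity)
  have hdenpos : (0:ℝ) < (‖u‖^2 + 1 : ℝ) ^ (((n:ℝ)+2+α)/2) :=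
    Real.rpow_pos_of_pos (by positivity) _
  have h2epos : (0:ℝ) < (2:ℝ) ^ (((n:ℝ)+2+α)/2) := Real.rpow_pos_of_pos (by norm_num) _
  have key : (1 - s₀ ^ ((α-β₁)/2)) * (1/2) * (C₃⁻¹ * (C₁ * Φ 2 * 8⁻¹)) *
        ((2:ℝ) ^ (((n:ℝ)+2+α)/2))⁻¹ * s ^ (α - q - 1 - β₁)
      = ((1 - s₀ ^ ((α-β₁)/2)) * (s ^ (α - q - 1) / 2)) *
          (C₃⁻¹ * (C₁ * Φ 2 * (8⁻¹ * s ^ (-β₁)))) / ((2:ℝ) ^ (((n:ℝ)+2+α)/2)) := by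
    rw [show α - q - 1 - β₁ = (α - q - 1) + (-β₁) by ring, Real.rpow_add hs]
    field_simp
  rw [key]
  show _ ≤ (s ^ q - 1) * (1 - s ^ (α - q - 1)) / (1 - s) ^ (1 + α) *
      B ((1 - s) • u, 1) (0, s) / (‖u‖ ^ 2 + 1) ^ (((n : ℝ) + 2 + α) / 2)
  have hmulle : ((1 - s₀ ^ ((α-β₁)/2)) * (s ^ (α - q - 1) / 2)) *
      (C₃⁻¹ * (C₁ * Φ 2 * (8⁻¹ * s ^ (-β₁))))
      ≤ (s ^ q - 1) * (1 - s ^ (α - q - 1)) / (1 - s) ^ (1 + α) *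
        B ((1 - s) • u, 1) (0, s) := by
    apply mul_le_mul (le_trans hnum hdiv) hBfinal (by positivity)
      (div_nonneg hNnn hDpos.le)
  apply div_le_div₀ (by positivity) hmulle hdenpos hdenle


set_option maxHeartbeats 1000000 in
lemma main_bound (n : ℕ) (α β₁ C₁ C₃ : ℝ) (Φ : ℝ → ℝ)
    (B : (EuclideanSpace ℝ (Fin (n + 1)) × ℝ) → (EuclideanSpace ℝ (Fin (n + 1)) × ℝ) → ℝ)
    (hα : 0 < α) (hβ0 : 0 ≤ β₁) (hβ₁1 : β₁ < 1) (hβ₁α : β₁ < α)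
    (hC₁ : 0 < C₁) (hC₃ : 1 ≤ C₃) (hΦ2 : 0 < Φ 2)
    (hΦlow : ∀ R : ℝ, 2 < R → C₁ * (R / 2) ^ β₁ ≤ Φ R / Φ 2)
    (hA3low : ∀ x y : EuclideanSpace ℝ (Fin (n + 1)) × ℝ, 0 < x.2 → 0 < y.2 →
      C₃⁻¹ * Φ (nrm (x - y) ^ 2 / (x.2 * y.2)) ≤ B x y) :
    ∃ K s₀ : ℝ, 0 < K ∧ 0 < s₀ ∧ s₀ ≤ 1/32 ∧
      ∀ q : ℝ, (α - β₁)/2 ≤ q → α - β₁ - (1-β₁)/2 ≤ q →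
        volume (Metric.ball (0 : EuclideanSpace ℝ (Fin (n+1))) 1) *
          (ENNReal.ofReal K *
            ∫⁻ s in Ioo (0:ℝ) s₀, ENNReal.ofReal (Real.exp (Real.log s * (α - q - 1 - β₁))))
          ≤ CconstE n α q B := by
  set s₀ : ℝ := min ((2:ℝ) ^ (-(2/(1-β₁)))) (1/32) with hs₀def
  have hs₀pos : 0 < s₀ := lt_min (Real.rpow_pos_of_pos two_pos _) (by norm_num)
  have hs₀32 : s₀ ≤ 1/32 := min_le_right _ _
  have hs₀exp : s₀ ≤ (2:ℝ) ^ (-(2/(1-β₁))) := min_le_left _ _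
  set K : ℝ := (1 - s₀ ^ ((α-β₁)/2)) * (1/2) * (C₃⁻¹ * (C₁ * Φ 2 * 8⁻¹)) *
      ((2:ℝ) ^ (((n:ℝ)+2+α)/2))⁻¹ with hKdef
  have hc₁pos : 0 < 1 - s₀ ^ ((α-β₁)/2) := by
    have := Real.rpow_lt_one hs₀pos.le (lt_of_le_of_lt hs₀32 (by norm_num))
      (by linarith : 0 < (α-β₁)/2)
    linarith
  have hKpos : 0 < K := by
    rw [hKdef]
    have h2e : (0:ℝ) < (2:ℝ) ^ (((n:ℝ)+2+α)/2) := Real.rpow_pos_of_pos (by norm_num) _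
    positivity
  refine ⟨K, s₀, hKpos, hs₀pos, hs₀32, ?_⟩
  intro q hq1 hq2
  set c : ℝ := α - q - 1 - β₁ with hcdef
  have hmeas : Measurable fun s : ℝ => ENNReal.ofReal (K * Real.exp (Real.log s * c)) :=
    (((Real.measurable_log.mul_const c).exp).const_mul K).ennreal_ofReal
  have hprod := lint_prod_snd (n := n) (Metric.ball (0 : EuclideanSpace ℝ (Fin (n+1))) 1)
      measurableSet_ball (Ioo (0:ℝ) s₀) measurableSet_Ioo
      (fun s => ENNReal.ofReal (K * Real.exp (Real.log s * c))) hmeas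
  calc volume (Metric.ball (0 : EuclideanSpace ℝ (Fin (n+1))) 1) *
        (ENNReal.ofReal K * ∫⁻ s in Ioo (0:ℝ) s₀, ENNReal.ofReal (Real.exp (Real.log s * c)))
      = volume (Metric.ball (0 : EuclideanSpace ℝ (Fin (n+1))) 1) *
          ∫⁻ s in Ioo (0:ℝ) s₀, ENNReal.ofReal (K * Real.exp (Real.log s * c)) := by
        congr 1
        rw [← lintegral_const_mul (ENNReal.ofReal K) (g_meas c)]
        exact lintegral_congr fun s => (ENNReal.ofReal_mul hKpos.le).symm
    _ = ∫⁻ p in (Metric.ball (0 : EuclideanSpace ℝ (Fin (n+1))) 1) ×ˢ Ioo (0:ℝ) s₀,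
          ENNReal.ofReal (K * Real.exp (Real.log p.2 * c)) := hprod.symm
    _ ≤ ∫⁻ p in (Metric.ball (0 : EuclideanSpace ℝ (Fin (n+1))) 1) ×ˢ Ioo (0:ℝ) s₀,
          ENNReal.ofReal (CconstIntegrand n α q B p) := by
        apply setLIntegral_mono' (measurableSet_ball.prod measurableSet_Ioo)
        rintro ⟨u, s⟩ ⟨hu, hsm⟩
        apply ENNReal.ofReal_le_ofReal
        rw [g_eq hsm.1, hKdef, hcdef]
        exact pointwise_bound n α β₁ C₁ C₃ Φ B hα hβ0 hβ₁1 hβ₁α hC₁ hC₃ hΦ2 hΦlow hA3low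
          s₀ hs₀pos hs₀32 hs₀exp q hq1 hq2 u (mem_ball_zero_iff.1 hu) s hsm.1 hsm.2
    _ ≤ CconstE n α q B := by
        apply lintegral_mono_set
        exact Set.prod_mono (Set.subset_univ _) (Set.Ioo_subset_Ioo le_rfl (by linarith))

end CconstAux

set_option maxHeartbeats 1000000 in
/-- For every `q ∈ [α−β₁, α)` the (nonnegative) integral defining
`C(α,q,B)` diverges, i.e. equals `+∞`; moreover `C(α,q,B) → +∞` as `q ↑ α−β₁`.
Here `d = n + 2 ≥ 2`. -/
theorem Cconst_diverges
    (n : ℕ) (α β₁ β₂ C₁ C₂ C₃ : ℝ) (Φ : ℝ → ℝ)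
    (B : (EuclideanSpace ℝ (Fin (n + 1)) × ℝ) → (EuclideanSpace ℝ (Fin (n + 1)) × ℝ) → ℝ)
    (hα : 0 < α) (hα2 : α < 2)
    (hβ0 : 0 ≤ β₁) (hβ : β₁ ≤ β₂) (hβ₂ : β₂ < min 1 α)
    (hC₁ : 0 < C₁) (hC₂ : 0 < C₂)
    (hΦmeas : Measurable Φ)
    (hΦpos : ∀ t : ℝ, 0 ≤ t → 0 < Φ t)
    (hΦflat : ∀ t : ℝ, 0 ≤ t → t < 2 → Φ t = Φ 2)
    (hΦscale : ∀ r R : ℝ, 2 ≤ r → r < R →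
      C₁ * (R / r) ^ β₁ ≤ Φ R / Φ r ∧ Φ R / Φ r ≤ C₂ * (R / r) ^ β₂)
    (hBmeas : Measurable (Function.uncurry B))
    (hBpos : ∀ x y : EuclideanSpace ℝ (Fin (n + 1)) × ℝ, 0 < x.2 → 0 < y.2 → 0 < B x y)
    (hC₃ : 1 ≤ C₃)
    (hA3 : ∀ x y : EuclideanSpace ℝ (Fin (n + 1)) × ℝ, 0 < x.2 → 0 < y.2 →
      C₃⁻¹ * Φ (nrm (x - y) ^ 2 / (x.2 * y.2)) ≤ B x y ∧
      B x y ≤ C₃ * Φ (nrm (x - y) ^ 2 / (x.2 * y.2))) :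
    (∀ q : ℝ, α - β₁ ≤ q → q < α → CconstE n α q B = ⊤) ∧
    Tendsto (fun q : ℝ => CconstE n α q B)
      (nhdsWithin (α - β₁) (Set.Iio (α - β₁))) (nhds ⊤) := by
  have hβ₁1 : β₁ < 1 := lt_of_le_of_lt hβ (lt_of_lt_of_le hβ₂ (min_le_left _ _))
  have hβ₁α : β₁ < α := lt_of_le_of_lt hβ (lt_of_lt_of_le hβ₂ (min_le_right _ _))
  have hΦ2 : 0 < Φ 2 := hΦpos 2 (by norm_num)
  obtain ⟨K, s₀, hK, hs₀, hs₀32, hmain⟩ :=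
    CconstAux.main_bound n α β₁ C₁ C₃ Φ B hα hβ0 hβ₁1 hβ₁α hC₁ hC₃ hΦ2
      (fun R hR => (hΦscale 2 R le_rfl hR).1)
      (fun x y hx hy => (hA3 x y hx hy).1)
  have hVpos : volume (Metric.ball (0 : EuclideanSpace ℝ (Fin (n+1))) 1) ≠ 0 :=
    (Metric.measure_ball_pos volume _ one_pos).ne'
  have hKne : ENNReal.ofReal K ≠ 0 := (ENNReal.ofReal_pos.mpr hK).ne'
  constructor
  · intro q hq hq'
    have h := hmain q (by linarith) (by linarith)
    have hJ : (∫⁻ s in Set.Ioo (0:ℝ) s₀,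
        ENNReal.ofReal (Real.exp (Real.log s * (α - q - 1 - β₁)))) = ⊤ :=
      CconstAux.lint_exp_eq_top hs₀ (by linarith)
    rw [hJ, ENNReal.mul_top hKne, ENNReal.mul_top hVpos] at h
    exact top_le_iff.mp h
  · have hq1a : max ((α-β₁)/2) (α - β₁ - (1-β₁)/2) < α - β₁ := by
      apply max_lt <;> linarith
    have hev : ∀ᶠ q in nhdsWithin (α - β₁) (Set.Iio (α - β₁)),
        q ∈ Set.Ioo (max ((α-β₁)/2) (α - β₁ - (1-β₁)/2)) (α - β₁) :=
      Ioo_mem_nhdsLT_of_mem ⟨hq1a, le_refl _⟩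
    have hVK : volume (Metric.ball (0 : EuclideanSpace ℝ (Fin (n+1))) 1) *
        ENNReal.ofReal K ≠ 0 := mul_ne_zero hVpos hKne
    have hreal : Tendsto (fun q : ℝ => s₀ ^ (α - β₁ - q) / (α - β₁ - q))
        (nhdsWithin (α - β₁) (Set.Iio (α - β₁))) atTop := by
      have hε : Tendsto (fun q : ℝ => α - β₁ - q)
          (nhdsWithin (α - β₁) (Set.Iio (α - β₁))) (nhdsWithin 0 (Set.Ioi (0:ℝ))) := by
        apply tendsto_nhdsWithin_of_tendsto_nhds_of_eventually_within
        · have h0 : Tendsto (fun q : ℝ => α - β₁ - q) (nhds (α - β₁))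
              (nhds ((α - β₁) - (α - β₁))) := tendsto_const_nhds.sub tendsto_id
          rw [sub_self] at h0
          exact h0.mono_left nhdsWithin_le_nhds
        · filter_upwards [self_mem_nhdsWithin] with q hq
          exact sub_pos.mpr (Set.mem_Iio.mp hq)
      have hfun : Tendsto (fun e : ℝ => s₀ ^ e / e) (nhdsWithin 0 (Set.Ioi (0:ℝ))) atTop := by
        have h1 : Tendsto (fun e : ℝ => s₀ ^ e) (nhdsWithin 0 (Set.Ioi (0:ℝ))) (nhds 1) := by
          have h2 := (Real.continuousAt_const_rpow (a := s₀) (b := 0) hs₀.ne').tendsto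
          rw [Real.rpow_zero] at h2
          exact h2.mono_left nhdsWithin_le_nhds
        have h2 : Tendsto (fun e : ℝ => e⁻¹) (nhdsWithin 0 (Set.Ioi (0:ℝ))) atTop :=
          tendsto_inv_nhdsGT_zero
        simpa [div_eq_mul_inv] using h1.pos_mul_atTop one_pos h2
      have := hfun.comp hε
      simpa [Function.comp_def] using this
    have hlow : Tendsto (fun q : ℝ =>
        volume (Metric.ball (0 : EuclideanSpace ℝ (Fin (n+1))) 1) * ENNReal.ofReal K *
          ENNReal.ofReal (s₀ ^ (α - β₁ - q) / (α - β₁ - q)))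
        (nhdsWithin (α - β₁) (Set.Iio (α - β₁))) (nhds ⊤) := by
      have h2 := ENNReal.tendsto_ofReal_atTop.comp hreal
      have h3 := ENNReal.Tendsto.const_mul
        (a := volume (Metric.ball (0 : EuclideanSpace ℝ (Fin (n+1))) 1) * ENNReal.ofReal K)
        h2 (Or.inl ENNReal.top_ne_zero)
      rw [ENNReal.mul_top hVK] at h3
      simpa [Function.comp] using h3
    apply tendsto_nhds_top_mono hlow
    filter_upwards [hev] with q hq
    have hmb := hmain q ((le_max_left _ _).trans hq.1.le) ((le_max_right _ _).trans hq.1.le)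
    refine le_trans ?_ hmb
    rw [mul_assoc]
    apply mul_le_mul_right
    apply mul_le_mul_right
    have hge := CconstAux.lint_exp_ge (c := α - q - 1 - β₁) hs₀ (by linarith [hq.2] : (-1:ℝ) < α - q - 1 - β₁)
    rw [show α - q - 1 - β₁ + 1 = α - β₁ - q from by ring] at hge
    exact hge
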